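/- Let Y be a real random variable with density bounded below by c_l > 0, let θ₀ be its α-quantile, and let θ be any real number with |θ − θ₀| bounded. Then Var(ℓ_α(θ, Y) − ℓ_α(θ₀, Y)) ≤ (2/c_l) · max(α, 1−α)² · R(θ₀, θ), where R(θ₀, θ) = 𝔼[ℓ_α(θ, Y) − ℓ_α(θ₀, Y)] is the excess pinball risk. -/

import Mathlib

/-!
Write `g(y) = ℓ_α(θ, y) - ℓ_α(θ₀, y)`. Since `ℓ_α(·, y)` is piecewise linear with slopes `-α` and
`1 - α`, `|g| ≤ max(α, 1 - α) |θ - θ₀|`, so `Var g ≤ 𝔼[g²] ≤ max(α, 1 - α)² (θ - θ₀)²`.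
On the other hand Knight's identity
`g(y) = (θ - θ₀)(1{y ≤ θ₀} - α) + 1{y ∈ (θ₀, θ]} |y - θ|` (with `(θ₀, θ]` read as the interval
between the two points) shows, because `θ₀` is the `α`-quantile, that `𝔼 g` is the integral of
`|y - θ|` over that interval, which the density bound makes at least `c_l (θ - θ₀)² / 2`.
-/

open MeasureTheory

/-- The pinball (quantile) loss at level `α`. -/
noncomputable def pinball (α θ y : ℝ) : ℝ :=
  if θ ≤ y then α * (y - θ) else (1 - α) * (θ - y)

/-- Variance of `h` under the measure `μ`. -/
noncomputable def varOf (μ : Measure ℝ) (h : ℝ → ℝ) : ℝ :=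
  ∫ x, (h x - ∫ y, h y ∂μ) ^ 2 ∂μ

open Set
open scoped Interval

lemma pinball_eq_add_max (α θ y : ℝ) : pinball α θ y = α * (y - θ) + max (θ - y) 0 := by
  unfold pinball
  split_ifs with h
  · rw [max_eq_right (by linarith)]; ring
  · rw [max_eq_left (by linarith)]; ring

lemma continuous_pinball (α θ : ℝ) : Continuous (pinball α θ) := by
  simp_rw [funext (pinball_eq_add_max α θ)]
  fun_prop

lemma abs_pinball_sub_pinball_le (α θ θ' y : ℝ) :
    |pinball α θ y - pinball α θ' y| ≤ max α (1 - α) * |θ - θ'| := by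
  have hα := le_max_left α (1 - α)
  have hα' := le_max_right α (1 - α)
  unfold pinball
  rcases le_total θ θ' with hθ | hθ
  · rw [abs_le, abs_of_nonpos (sub_nonpos.2 hθ)]
    split_ifs <;> constructor <;> nlinarith
  · rw [abs_le, abs_of_nonneg (sub_nonneg.2 hθ)]
    split_ifs <;> constructor <;> nlinarith

lemma pinball_sub_pinball_eq (α θ₀ θ y : ℝ) :
    pinball α θ y - pinball α θ₀ y =
      (θ - θ₀) * ((Iic θ₀).indicator 1 y - α) + (Ι θ₀ θ).indicator (fun z => |z - θ|) y := by
  simp only [pinball_eq_add_max, indicator, mem_Iic, mem_uIoc, Pi.one_apply]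
  split_ifs <;> grind

lemma integral_uIoc_abs_sub (a b : ℝ) : ∫ y in Ι a b, |y - b| = (b - a) ^ 2 / 2 := by
  rcases le_total a b with h | h
  · rw [uIoc_of_le h, setIntegral_congr_fun measurableSet_Ioc
      (fun y hy => abs_of_nonpos (sub_nonpos.2 hy.2)), ← intervalIntegral.integral_of_le h,
      intervalIntegral.integral_neg]
    simp
    ring
  · rw [uIoc_of_ge h, setIntegral_congr_fun measurableSet_Ioc
      (fun y hy => abs_of_pos (sub_pos.2 hy.1)), ← intervalIntegral.integral_of_le h]
    simp
    ring

lemma smul_restrict_le_restrict_withDensity {X : Type*} [MeasurableSpace X] (μ : Measure X)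
    {p : X → ℝ} {s : Set X} (hs : MeasurableSet s) {c : ℝ} (h : ∀ x ∈ s, c ≤ p x) :
    ENNReal.ofReal c • μ.restrict s ≤
      (μ.withDensity fun x => ENNReal.ofReal (p x)).restrict s := by
  rw [restrict_withDensity hs, ← withDensity_const]
  exact withDensity_mono <|
    (ae_restrict_iff' hs).2 (.of_forall fun x hx => ENNReal.ofReal_le_ofReal (h x hx))

lemma varOf_le_integral_sq (μ : Measure ℝ) [IsProbabilityMeasure μ] {h : ℝ → ℝ}
    (hh : AEMeasurable h μ) :
    varOf μ h ≤ ∫ x, h x ^ 2 ∂μ := by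
  rw [varOf, ← ProbabilityTheory.variance_eq_integral hh]
  exact ProbabilityTheory.variance_le_expectation_sq hh.aestronglyMeasurable

lemma mul_sq_le_integral_pinball_sub {α c θ₀ θ : ℝ} {p : ℝ → ℝ} {P : Measure ℝ}
    [IsProbabilityMeasure P] (hdens : P = volume.withDensity fun y => ENNReal.ofReal (p y))
    (hc : 0 ≤ c) (hlow : ∀ y ∈ uIcc θ₀ θ, c ≤ p y) (hα : 0 ≤ α)
    (hquant : P (Iic θ₀) = ENNReal.ofReal α) :
    c / 2 * (θ - θ₀) ^ 2 ≤ ∫ y, (pinball α θ y - pinball α θ₀ y) ∂P := by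
  have hquant' : P.real (Iic θ₀) = α := by
    rw [measureReal_def, hquant, ENNReal.toReal_ofReal hα]
  have hind : Integrable ((Iic θ₀).indicator (1 : ℝ → ℝ)) P :=
    (integrable_const 1).indicator measurableSet_Iic
  have hlin : Integrable (fun y => (θ - θ₀) * ((Iic θ₀).indicator 1 y - α)) P :=
    (hind.sub (integrable_const α)).const_mul _
  have hrem : IntegrableOn (fun y => |y - θ|) (Ι θ₀ θ) P :=
    ((continuous_abs.comp (continuous_sub_right θ)).continuousOn.integrableOn_compact
      isCompact_uIcc).mono_set uIoc_subset_uIcc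
  have hdom : ENNReal.ofReal c • volume.restrict (Ι θ₀ θ) ≤ P.restrict (Ι θ₀ θ) :=
    hdens ▸ smul_restrict_le_restrict_withDensity volume measurableSet_uIoc
      fun y hy => hlow y (uIoc_subset_uIcc hy)
  calc c / 2 * (θ - θ₀) ^ 2
        = ∫ y, |y - θ| ∂(ENNReal.ofReal c • volume.restrict (Ι θ₀ θ)) := by
        rw [integral_smul_measure, integral_uIoc_abs_sub, ENNReal.toReal_ofReal hc, smul_eq_mul]
        ring
    _ ≤ ∫ y in Ι θ₀ θ, |y - θ| ∂P :=
        integral_mono_measure hdom (.of_forall fun _ => abs_nonneg _) hrem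
    _ = ∫ y, (pinball α θ y - pinball α θ₀ y) ∂P := by
        simp_rw [pinball_sub_pinball_eq]
        rw [integral_add hlin (hrem.integrable_indicator measurableSet_uIoc), integral_const_mul,
          integral_sub hind (integrable_const α),
          integral_indicator measurableSet_Iic, integral_indicator measurableSet_uIoc]
        simp [hquant']

theorem stmt4_general (α : ℝ) (hα : α ∈ Set.Ioo (0 : ℝ) 1)
    (p : ℝ → ℝ) (P : Measure ℝ) [IsProbabilityMeasure P]
    (hdens : P = volume.withDensity (fun y => ENNReal.ofReal (p y)))
    (θ₀ θ : ℝ)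
    (c_l : ℝ) (hcl : 0 < c_l)
    (hlow : ∀ y ∈ Set.uIcc θ₀ θ, c_l ≤ p y)
    (hquant : P (Set.Iic θ₀) = ENNReal.ofReal α) :
    varOf P (fun y => pinball α θ y - pinball α θ₀ y) ≤
      2 / c_l * max α (1 - α) ^ 2 * ∫ y, (pinball α θ y - pinball α θ₀ y) ∂P := by
  set M := max α (1 - α)
  have hsq (y : ℝ) : (pinball α θ y - pinball α θ₀ y) ^ 2 ≤ M ^ 2 * (θ - θ₀) ^ 2 := by
    rw [← sq_abs, ← sq_abs (θ - θ₀), ← mul_pow]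
    exact pow_le_pow_left₀ (abs_nonneg _) (abs_pinball_sub_pinball_le α θ θ₀ y) 2
  have hrisk := mul_sq_le_integral_pinball_sub hdens hcl.le hlow hα.1.le hquant
  calc varOf P (fun y => pinball α θ y - pinball α θ₀ y)
      ≤ ∫ y, (pinball α θ y - pinball α θ₀ y) ^ 2 ∂P :=
        varOf_le_integral_sq P
          ((continuous_pinball α θ).sub (continuous_pinball α θ₀)).aemeasurable
    _ ≤ M ^ 2 * (θ - θ₀) ^ 2 := by
        simpa using integral_mono_of_nonneg (.of_forall fun _ => sq_nonneg _)
          (integrable_const (μ := P) _) (.of_forall hsq)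
    _ = 2 / c_l * M ^ 2 * (c_l / 2 * (θ - θ₀) ^ 2) := by field_simp
    _ ≤ 2 / c_l * M ^ 2 * ∫ y, (pinball α θ y - pinball α θ₀ y) ∂P := by gcongr

/-- Variance–mean relation for the pinball loss: if the distribution of `Y` has a density
bounded below by `c_l > 0` (on the interval between `θ₀` and `θ`), `θ₀` is its `α`-quantile,
and `|θ - θ₀|` is bounded, then the variance of the excess loss is bounded by
`(2/c_l) max(α, 1-α)²` times the excess pinball risk. -/
theorem stmt4 (α : ℝ) (hα : α ∈ Set.Ioo (0 : ℝ) 1)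
    (p : ℝ → ℝ) (P : Measure ℝ) [IsProbabilityMeasure P]
    (hdens : P = volume.withDensity (fun y => ENNReal.ofReal (p y)))
    (θ₀ θ : ℝ) (B : ℝ) (hB : |θ - θ₀| ≤ B)
    (c_l : ℝ) (hcl : 0 < c_l)
    (hlow : ∀ y ∈ Set.uIcc θ₀ θ, c_l ≤ p y)
    (hquant : P (Set.Iic θ₀) = ENNReal.ofReal α)
    (hint : Integrable id P) :
    varOf P (fun y => pinball α θ y - pinball α θ₀ y) ≤
      2 / c_l * max α (1 - α) ^ 2 * ∫ y, (pinball α θ y - pinball α θ₀ y) ∂P :=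
  stmt4_general α hα p P hdens θ₀ θ c_l hcl hlow hquant
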